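/- Let X be a radical object of C₂(P). Then Ext¹_{C₂(P)}(X, X^*)_{K_{X¹} ⊕ K^*_{X⁰}} — the set of equivalence classes of short exact sequences 0 → X^* → Z → X → 0 in C₂(P) whose middle term Z is isomorphic to K_{X¹} ⊕ K^*_{X⁰} — is in bijection with the group Aut_{K₂(P)}(X) of automorphisms of X in K₂(P). -/

import Mathlib

open CategoryTheory

universe u

noncomputable section

variable (R : Type u) [Ring R]

structure TwoCx : Type (u + 1) where
  X1 : ModuleCat.{u} R
  X0 : ModuleCat.{u} R
  fin1 : Module.Finite R X1
  proj1 : Module.Projective R X1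
  fin0 : Module.Finite R X0
  proj0 : Module.Projective R X0
  d1 : X1 ⟶ X0
  d0 : X0 ⟶ X1
  dd1 : d1 ≫ d0 = 0
  dd0 : d0 ≫ d1 = 0

variable {R}

@[ext]
structure TwoHom (X Y : TwoCx R) : Type u where
  f1 : X.X1 ⟶ Y.X1
  f0 : X.X0 ⟶ Y.X0
  comm1 : X.d1 ≫ f0 = f1 ≫ Y.d1
  comm0 : X.d0 ≫ f1 = f0 ≫ Y.d0

instance : CategoryStruct (TwoCx R) where
  Hom := TwoHom
  id X := ⟨𝟙 X.X1, 𝟙 X.X0, by simp, by simp⟩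
  comp {X Y Z} f g :=
    ⟨f.f1 ≫ g.f1, f.f0 ≫ g.f0, by
      rw [← Category.assoc, f.comm1, Category.assoc, g.comm1, ← Category.assoc], by
      rw [← Category.assoc, f.comm0, Category.assoc, g.comm0, ← Category.assoc]⟩

@[simp] theorem id_f1 (X : TwoCx R) : TwoHom.f1 (𝟙 X) = 𝟙 X.X1 := rfl
@[simp] theorem id_f0 (X : TwoCx R) : TwoHom.f0 (𝟙 X) = 𝟙 X.X0 := rfl
@[simp] theorem comp_f1 {X Y Z : TwoCx R} (f : X ⟶ Y) (g : Y ⟶ Z) :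
    TwoHom.f1 (f ≫ g) = TwoHom.f1 f ≫ TwoHom.f1 g := rfl
@[simp] theorem comp_f0 {X Y Z : TwoCx R} (f : X ⟶ Y) (g : Y ⟶ Z) :
    TwoHom.f0 (f ≫ g) = TwoHom.f0 f ≫ TwoHom.f0 g := rfl

@[ext] theorem hom_ext {X Y : TwoCx R} {f g : X ⟶ Y}
    (h1 : TwoHom.f1 f = TwoHom.f1 g) (h0 : TwoHom.f0 f = TwoHom.f0 g) : f = g :=
  TwoHom.ext h1 h0

instance : Category (TwoCx R) where
  id_comp f := by ext <;> simp
  comp_id f := by ext <;> simp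
  assoc f g h := by ext <;> simp

section HomGroup

variable {X Y : TwoCx R}

instance : Zero (X ⟶ Y) :=
  ⟨TwoHom.mk 0 0 (by simp) (by simp)⟩

@[simp] theorem zero_f1 : TwoHom.f1 (0 : X ⟶ Y) = 0 := rfl
@[simp] theorem zero_f0 : TwoHom.f0 (0 : X ⟶ Y) = 0 := rfl

instance : Add (X ⟶ Y) :=
  ⟨fun f g => TwoHom.mk (f.f1 + g.f1) (f.f0 + g.f0)
    (by rw [Preadditive.comp_add, f.comm1, g.comm1, ← Preadditive.add_comp])
    (by rw [Preadditive.comp_add, f.comm0, g.comm0, ← Preadditive.add_comp])⟩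

@[simp] theorem add_f1 (f g : X ⟶ Y) :
    TwoHom.f1 (f + g) = TwoHom.f1 f + TwoHom.f1 g := rfl
@[simp] theorem add_f0 (f g : X ⟶ Y) :
    TwoHom.f0 (f + g) = TwoHom.f0 f + TwoHom.f0 g := rfl

instance : Neg (X ⟶ Y) :=
  ⟨fun f => TwoHom.mk (-f.f1) (-f.f0)
    (by rw [Preadditive.comp_neg, f.comm1, ← Preadditive.neg_comp])
    (by rw [Preadditive.comp_neg, f.comm0, ← Preadditive.neg_comp])⟩

@[simp] theorem neg_f1 (f : X ⟶ Y) : TwoHom.f1 (-f) = -TwoHom.f1 f := rfl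
@[simp] theorem neg_f0 (f : X ⟶ Y) : TwoHom.f0 (-f) = -TwoHom.f0 f := rfl

instance : AddCommGroup (X ⟶ Y) where
  add := (· + ·)
  zero := 0
  neg := Neg.neg
  add_assoc a b c := by ext <;> simp [add_assoc]
  zero_add a := by ext <;> simp
  add_zero a := by ext <;> simp
  add_comm a b := by ext <;> simp [add_comm]
  neg_add_cancel a := by ext <;> simp
  nsmul := nsmulRec
  zsmul := zsmulRec

@[simp] theorem sub_f1 (f g : X ⟶ Y) :
    TwoHom.f1 (f - g) = TwoHom.f1 f - TwoHom.f1 g := by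
  show TwoHom.f1 (f + -g) = _
  rw [add_f1, neg_f1, sub_eq_add_neg]

@[simp] theorem sub_f0 (f g : X ⟶ Y) :
    TwoHom.f0 (f - g) = TwoHom.f0 f - TwoHom.f0 g := by
  show TwoHom.f0 (f + -g) = _
  rw [add_f0, neg_f0, sub_eq_add_neg]

end HomGroup

instance : Preadditive (TwoCx R) where
  add_comp := by intros; ext <;> simp
  comp_add := by intros; ext <;> simp

def Homotopic {X Y : TwoCx R} (f g : X ⟶ Y) : Prop :=
  ∃ (h1 : X.X1 ⟶ Y.X0) (h0 : X.X0 ⟶ Y.X1),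
    TwoHom.f1 f - TwoHom.f1 g = h1 ≫ Y.d0 + X.d1 ≫ h0 ∧
    TwoHom.f0 f - TwoHom.f0 g = h0 ≫ Y.d1 + X.d0 ≫ h1

def Contractible (X : TwoCx R) : Prop := Homotopic (𝟙 X) (0 : X ⟶ X)

def IsHtpEquiv {X Y : TwoCx R} (f : X ⟶ Y) : Prop :=
  ∃ g : Y ⟶ X, Homotopic (f ≫ g) (𝟙 X) ∧ Homotopic (g ≫ f) (𝟙 Y)

def HtpEquiv (X Y : TwoCx R) : Prop := ∃ f : X ⟶ Y, IsHtpEquiv f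

def modRad (M : ModuleCat.{u} R) : Submodule R M :=
  sInf {N : Submodule R M | IsCoatom N}

def RadicalCx (X : TwoCx R) : Prop :=
  LinearMap.range X.d1.hom ≤ modRad X.X0 ∧ LinearMap.range X.d0.hom ≤ modRad X.X1

def dsum (X Y : TwoCx R) : TwoCx R where
  X1 := ModuleCat.of R (X.X1 × Y.X1)
  X0 := ModuleCat.of R (X.X0 × Y.X0)
  fin1 := by haveI := X.fin1; haveI := Y.fin1; exact (inferInstance : Module.Finite R (X.X1 × Y.X1))
  proj1 := by haveI := X.proj1; haveI := Y.proj1; exact (inferInstance : Module.Projective R (X.X1 × Y.X1))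
  fin0 := by haveI := X.fin0; haveI := Y.fin0; exact (inferInstance : Module.Finite R (X.X0 × Y.X0))
  proj0 := by haveI := X.proj0; haveI := Y.proj0; exact (inferInstance : Module.Projective R (X.X0 × Y.X0))
  d1 := ModuleCat.ofHom (LinearMap.prodMap X.d1.hom Y.d1.hom)
  d0 := ModuleCat.ofHom (LinearMap.prodMap X.d0.hom Y.d0.hom)
  dd1 := by
    have h1 : LinearMap.comp X.d0.hom X.d1.hom = 0 := by rw [← ModuleCat.hom_comp, X.dd1]; rfl
    have h2 : LinearMap.comp Y.d0.hom Y.d1.hom = 0 := by rw [← ModuleCat.hom_comp, Y.dd1]; rfl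
    apply ModuleCat.hom_ext
    show LinearMap.comp (LinearMap.prodMap X.d0.hom Y.d0.hom) (LinearMap.prodMap X.d1.hom Y.d1.hom) = 0
    rw [LinearMap.prodMap_comp, h1, h2, LinearMap.prodMap_zero]
  dd0 := by
    have h1 : LinearMap.comp X.d1.hom X.d0.hom = 0 := by rw [← ModuleCat.hom_comp, X.dd0]; rfl
    have h2 : LinearMap.comp Y.d1.hom Y.d0.hom = 0 := by rw [← ModuleCat.hom_comp, Y.dd0]; rfl
    apply ModuleCat.hom_ext
    show LinearMap.comp (LinearMap.prodMap X.d1.hom Y.d1.hom) (LinearMap.prodMap X.d0.hom Y.d0.hom) = 0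
    rw [LinearMap.prodMap_comp, h1, h2, LinearMap.prodMap_zero]

def kP (P : ModuleCat.{u} R) (h1 : Module.Finite R P) (h2 : Module.Projective R P) : TwoCx R :=
  ⟨P, P, h1, h2, h1, h2, 𝟙 P, 0, by simp, by simp⟩

def kS (P : ModuleCat.{u} R) (h1 : Module.Finite R P) (h2 : Module.Projective R P) : TwoCx R :=
  ⟨P, P, h1, h2, h1, h2, 0, 𝟙 P, by simp, by simp⟩

def starCx (X : TwoCx R) : TwoCx R :=
  ⟨X.X0, X.X1, X.fin0, X.proj0, X.fin1, X.proj1, -X.d0, -X.d1,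
    by simp [X.dd0], by simp [X.dd1]⟩

-- ## The homotopy category
variable (R) in
def htpRel : HomRel (TwoCx R) := fun _ _ f g => Homotopic f g

abbrev KTwo (R : Type u) [Ring R] := CategoryTheory.Quotient (htpRel R)

def KFun (R : Type u) [Ring R] : TwoCx R ⥤ KTwo R := Quotient.functor _

-- ## Short exact sequences
structure SESData (Y Z X : TwoCx R) where
  a : Y ⟶ Z
  b : Z ⟶ X
  inj1 : Function.Injective (TwoHom.f1 a)
  inj0 : Function.Injective (TwoHom.f0 a)
  surj1 : Function.Surjective (TwoHom.f1 b)
  surj0 : Function.Surjective (TwoHom.f0 b)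
  exact1 : LinearMap.range (TwoHom.f1 a).hom = LinearMap.ker (TwoHom.f1 b).hom
  exact0 : LinearMap.range (TwoHom.f0 a).hom = LinearMap.ker (TwoHom.f0 b).hom

def SESEquiv {Y X Z Z' : TwoCx R} (s : SESData Y Z X) (t : SESData Y Z' X) : Prop :=
  ∃ e : Z ≅ Z', s.a ≫ e.hom = t.a ∧ e.hom ≫ t.b = s.b

/-- The two components of a morphism `X ⟶ Y^*`, with their natural types. -/
def sf1 {X Y : TwoCx R} (f : X ⟶ starCx Y) : X.X1 →ₗ[R] Y.X0 := (TwoHom.f1 f).hom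
def sf0 {X Y : TwoCx R} (f : X ⟶ starCx Y) : X.X0 →ₗ[R] Y.X1 := (TwoHom.f0 f).hom

-- ## The middle term associated to `f : X ⟶ Y^*`
def coneCx {X Y : TwoCx R} (f : X ⟶ starCx Y) : TwoCx R where
  X1 := ModuleCat.of R (X.X1 × Y.X1)
  X0 := ModuleCat.of R (X.X0 × Y.X0)
  fin1 := by haveI := X.fin1; haveI := Y.fin1; exact (inferInstance : Module.Finite R (X.X1 × Y.X1))
  proj1 := by haveI := X.proj1; haveI := Y.proj1; exact (inferInstance : Module.Projective R (X.X1 × Y.X1))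
  fin0 := by haveI := X.fin0; haveI := Y.fin0; exact (inferInstance : Module.Finite R (X.X0 × Y.X0))
  proj0 := by haveI := X.proj0; haveI := Y.proj0; exact (inferInstance : Module.Projective R (X.X0 × Y.X0))
  d1 := ModuleCat.ofHom (LinearMap.prod (X.d1.hom ∘ₗ LinearMap.fst R X.X1 Y.X1)
    (Y.d1.hom ∘ₗ LinearMap.snd R X.X1 Y.X1 - sf1 f ∘ₗ LinearMap.fst R X.X1 Y.X1))
  d0 := ModuleCat.ofHom (LinearMap.prod (X.d0.hom ∘ₗ LinearMap.fst R X.X0 Y.X0)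
    (Y.d0.hom ∘ₗ LinearMap.snd R X.X0 Y.X0 - sf0 f ∘ₗ LinearMap.fst R X.X0 Y.X0))
  dd1 := by
    apply ModuleCat.hom_ext
    refine LinearMap.ext fun p => Prod.ext ?_ ?_
    · show X.d0 (X.d1 p.1) = 0
      exact LinearMap.congr_fun (congrArg ModuleCat.Hom.hom X.dd1) p.1
    · show Y.d0 (Y.d1 p.2 - sf1 f p.1) - sf0 f (X.d1 p.1) = 0
      have hY : Y.d0 (Y.d1 p.2) = 0 := LinearMap.congr_fun (congrArg ModuleCat.Hom.hom Y.dd1) p.2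
      have hc : sf0 f (X.d1 p.1) = -(Y.d0 (sf1 f p.1)) := LinearMap.congr_fun (congrArg ModuleCat.Hom.hom f.comm1) p.1
      rw [map_sub, hY, hc]
      simp
  dd0 := by
    apply ModuleCat.hom_ext
    refine LinearMap.ext fun p => Prod.ext ?_ ?_
    · show X.d1 (X.d0 p.1) = 0
      exact LinearMap.congr_fun (congrArg ModuleCat.Hom.hom X.dd0) p.1
    · show Y.d1 (Y.d0 p.2 - sf0 f p.1) - sf1 f (X.d0 p.1) = 0
      have hY : Y.d1 (Y.d0 p.2) = 0 := LinearMap.congr_fun (congrArg ModuleCat.Hom.hom Y.dd0) p.2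
      have hc : sf1 f (X.d0 p.1) = -(Y.d1 (sf0 f p.1)) := LinearMap.congr_fun (congrArg ModuleCat.Hom.hom f.comm0) p.1
      rw [map_sub, hY, hc]
      simp

/-- The canonical inclusion `Y ⟶ Z_f`. -/
def coneIn {X Y : TwoCx R} (f : X ⟶ starCx Y) : Y ⟶ coneCx f where
  f1 := ModuleCat.ofHom (LinearMap.inr R X.X1 Y.X1)
  f0 := ModuleCat.ofHom (LinearMap.inr R X.X0 Y.X0)
  comm1 := by
    apply ModuleCat.hom_ext
    refine LinearMap.ext fun y => Prod.ext ?_ ?_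
    · show (0 : X.X0) = X.d1 0
      simp
    · show Y.d1 y = Y.d1 y - sf1 f 0
      simp
  comm0 := by
    apply ModuleCat.hom_ext
    refine LinearMap.ext fun y => Prod.ext ?_ ?_
    · show (0 : X.X1) = X.d0 0
      simp
    · show Y.d0 y = Y.d0 y - sf0 f 0
      simp

/-- The canonical projection `Z_f ⟶ X`. -/
def coneOut {X Y : TwoCx R} (f : X ⟶ starCx Y) : coneCx f ⟶ X where
  f1 := ModuleCat.ofHom (LinearMap.fst R X.X1 Y.X1)
  f0 := ModuleCat.ofHom (LinearMap.fst R X.X0 Y.X0)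
  comm1 := ModuleCat.hom_ext (LinearMap.ext fun _ => rfl)
  comm0 := ModuleCat.hom_ext (LinearMap.ext fun _ => rfl)

/-- The canonical short exact sequence `0 ⟶ Y ⟶ Z_f ⟶ X ⟶ 0`. -/
def canonSES {X Y : TwoCx R} (f : X ⟶ starCx Y) : SESData Y (coneCx f) X where
  a := coneIn f
  b := coneOut f
  inj1 := LinearMap.inr_injective
  inj0 := LinearMap.inr_injective
  surj1 := LinearMap.fst_surjective
  surj0 := LinearMap.fst_surjective
  exact1 := LinearMap.range_inr R X.X1 Y.X1
  exact0 := LinearMap.range_inr R X.X0 Y.X0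

-- ## scalar endomorphisms
def scalarMod [Algebra ℂ R] (c : ℂ) (M : ModuleCat.{u} R) : M ⟶ M :=
  ModuleCat.ofHom
  { toFun := fun m => algebraMap ℂ R c • m
    map_add' := fun x y => smul_add _ x y
    map_smul' := fun r m => by
      simp only [RingHom.id_apply, smul_smul, Algebra.commutes] }

def scalarHom [Algebra ℂ R] (c : ℂ) (X : TwoCx R) : X ⟶ X where
  f1 := scalarMod c X.X1
  f0 := scalarMod c X.X0
  comm1 := by
    apply ModuleCat.hom_ext
    refine LinearMap.ext fun x => ?_
    exact (map_smul X.d1.hom (algebraMap ℂ R c) x).symm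
  comm0 := by
    apply ModuleCat.hom_ext
    refine LinearMap.ext fun x => ?_
    exact (map_smul X.d0.hom (algebraMap ℂ R c) x).symm

end


/-!
An extension `0 → X^* → Z → X → 0` has a connecting endomorphism `δ : X → X`, computed from any
degreewise splitting of `Z → X` and well defined up to homotopy; the extension is equivalent to
the canonical one on the cone of `δ`, and homotopic endomorphisms have equivalent cones. So
extensions are classified by homotopy classes of endomorphisms, and the point is to see which
middle terms occur. If `Z ≅ K_{X¹} ⊕ K^*_{X⁰}` then the cone of `δ` is contractible, which makes
`δ` a homotopy equivalence. For radical `X` a homotopy equivalence `f` with homotopy inverse `g`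
is even an isomorphism: `g ∘ f - 1` and `f ∘ g - 1` are null-homotopic, hence take values in the
radical, so Nakayama's lemma makes `g ∘ f` and `f ∘ g` surjective. Conversely the cone of an
isomorphism is isomorphic to `K_{X¹} ⊕ K^*_{X⁰}`.
-/

open CategoryTheory

noncomputable section

variable {R : Type u} [Ring R]

-- Lets the carriers of these complexes unfold to the underlying products when elements are built.
attribute [reducible] starCx coneCx dsum kP kS

namespace TwoCx

variable (X : TwoCx R)

@[simp] theorem d0_d1_apply (x : X.X1) : X.d0 (X.d1 x) = 0 := by
  simpa using ConcreteCategory.congr_hom X.dd1 x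

@[simp] theorem d1_d0_apply (x : X.X0) : X.d1 (X.d0 x) = 0 := by
  simpa using ConcreteCategory.congr_hom X.dd0 x

end TwoCx

namespace TwoHom

variable {X Y : TwoCx R} (f : X ⟶ Y)

theorem comm1_apply (x : X.X1) : f.f0 (X.d1 x) = Y.d1 (f.f1 x) := by
  simpa using ConcreteCategory.congr_hom f.comm1 x

theorem comm0_apply (x : X.X0) : f.f1 (X.d0 x) = Y.d0 (f.f0 x) := by
  simpa using ConcreteCategory.congr_hom f.comm0 x

end TwoHom

namespace Homotopic

variable {X Y Z : TwoCx R}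

theorem refl (f : X ⟶ Y) : Homotopic f f :=
  ⟨0, 0, by simp, by simp⟩

theorem symm {f g : X ⟶ Y} (h : Homotopic f g) : Homotopic g f := by
  obtain ⟨h1, h0, e1, e0⟩ := h
  refine ⟨-h1, -h0, ?_, ?_⟩
  · rw [← neg_sub, e1]; simp [add_comm]
  · rw [← neg_sub, e0]; simp [add_comm]

theorem trans {f g k : X ⟶ Y} (h : Homotopic f g) (h' : Homotopic g k) : Homotopic f k := by
  obtain ⟨h1, h0, e1, e0⟩ := h
  obtain ⟨h1', h0', e1', e0'⟩ := h'
  refine ⟨h1 + h1', h0 + h0', ?_, ?_⟩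
  · rw [← sub_add_sub_cancel _ (TwoHom.f1 g), e1, e1']
    simp only [Preadditive.add_comp, Preadditive.comp_add]
    abel
  · rw [← sub_add_sub_cancel _ (TwoHom.f0 g), e0, e0']
    simp only [Preadditive.add_comp, Preadditive.comp_add]
    abel

theorem comp_left (f : X ⟶ Y) {g g' : Y ⟶ Z} (h : Homotopic g g') :
    Homotopic (f ≫ g) (f ≫ g') := by
  obtain ⟨h1, h0, e1, e0⟩ := h
  refine ⟨f.f1 ≫ h1, f.f0 ≫ h0, ?_, ?_⟩
  · rw [comp_f1, comp_f1, ← Preadditive.comp_sub, e1, Preadditive.comp_add]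
    simp [reassoc_of% f.comm1]
  · rw [comp_f0, comp_f0, ← Preadditive.comp_sub, e0, Preadditive.comp_add]
    simp [reassoc_of% f.comm0]

theorem comp_right {f f' : X ⟶ Y} (h : Homotopic f f') (g : Y ⟶ Z) :
    Homotopic (f ≫ g) (f' ≫ g) := by
  obtain ⟨h1, h0, e1, e0⟩ := h
  refine ⟨h1 ≫ g.f0, h0 ≫ g.f1, ?_, ?_⟩
  · rw [comp_f1, comp_f1, ← Preadditive.sub_comp, e1, Preadditive.add_comp]
    simp [g.comm0]
  · rw [comp_f0, comp_f0, ← Preadditive.sub_comp, e0, Preadditive.add_comp]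
    simp [g.comm1]

end Homotopic

theorem homotopic_iff_apply {X Y : TwoCx R} (f g : X ⟶ Y) :
    Homotopic f g ↔ ∃ (h1 : X.X1 ⟶ Y.X0) (h0 : X.X0 ⟶ Y.X1),
      (∀ x, f.f1 x - g.f1 x = Y.d0 (h1 x) + h0 (X.d1 x)) ∧
      (∀ x, f.f0 x - g.f0 x = Y.d1 (h0 x) + h1 (X.d0 x)) := by
  simp only [Homotopic, ModuleCat.hom_ext_iff, LinearMap.ext_iff]
  rfl

instance : Congruence (htpRel R) where
  equivalence := ⟨Homotopic.refl, Homotopic.symm, Homotopic.trans⟩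
  comp_left f _ _ := Homotopic.comp_left f
  comp_right g h := h.comp_right g

instance : (KFun R).Full := Quotient.full_functor (htpRel R)

theorem KFun_map_eq_iff {X Y : TwoCx R} (f g : X ⟶ Y) :
    (KFun R).map f = (KFun R).map g ↔ Homotopic f g :=
  Quotient.functor_map_eq_iff (htpRel R) f g

theorem isHtpEquiv_preimage {X Y : TwoCx R} (α : (KFun R).obj X ≅ (KFun R).obj Y) :
    IsHtpEquiv ((KFun R).preimage α.hom) :=
  ⟨(KFun R).preimage α.inv, (KFun_map_eq_iff _ _).1 (by simp), (KFun_map_eq_iff _ _).1 (by simp)⟩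

theorem Contractible.of_iso {X Y : TwoCx R} (e : X ≅ Y) (h : Contractible X) :
    Contractible Y := by
  simpa [Contractible] using (h.comp_right e.hom).comp_left e.inv

theorem isIso_of_bijective {X Y : TwoCx R} (f : X ⟶ Y) (h1 : Function.Bijective f.f1)
    (h0 : Function.Bijective f.f0) : IsIso f := by
  have : IsIso f.f1 := (ConcreteCategory.isIso_iff_bijective _).2 h1
  have : IsIso f.f0 := (ConcreteCategory.isIso_iff_bijective _).2 h0
  let g : Y ⟶ X :=
    { f1 := inv f.f1
      f0 := inv f.f0
      comm1 := by rw [IsIso.eq_inv_comp, ← Category.assoc, ← f.comm1]; simp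
      comm0 := by rw [IsIso.eq_inv_comp, ← Category.assoc, ← f.comm0]; simp }
  exact ⟨g, by ext <;> simp [g], by ext <;> simp [g]⟩

section Radical

variable {M : Type u} [AddCommGroup M] [Module R M]

theorem surjective_of_sub_mem_jacobson [Module.Finite R M] (u : M →ₗ[R] M)
    (h : ∀ x, u x - x ∈ Module.jacobson R M) : Function.Surjective u := by
  rw [← LinearMap.range_eq_top]
  by_contra hu
  obtain ⟨N, hN, hle⟩ := (eq_top_or_exists_le_coatom (LinearMap.range u)).resolve_left hu
  refine hN.1 (eq_top_iff.2 fun x _ => ?_)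
  have hJN : Module.jacobson R M ≤ N := sInf_le hN
  have hx : u x - (u x - x) ∈ N := sub_mem (hle ⟨x, rfl⟩) (hJN (h x))
  rwa [sub_sub_cancel] at hx

theorem bijective_of_sub_mem_jacobson [OrzechProperty R] [Module.Finite R M] (u : M →ₗ[R] M)
    (h : ∀ x, u x - x ∈ Module.jacobson R M) : Function.Bijective u :=
  OrzechProperty.bijective_of_surjective_endomorphism u (surjective_of_sub_mem_jacobson u h)

end Radical

namespace RadicalCx

variable {X : TwoCx R} (hX : RadicalCx X)
include hX

theorem homotopy_apply_mem_jacobson_X1 (k1 : X.X1 ⟶ X.X0) (k0 : X.X0 ⟶ X.X1) (x : X.X1) :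
    X.d0 (k1 x) + k0 (X.d1 x) ∈ Module.jacobson R X.X1 :=
  add_mem (hX.2 ⟨_, rfl⟩) (Module.le_comap_jacobson k0.hom (hX.1 ⟨x, rfl⟩))

theorem homotopy_apply_mem_jacobson_X0 (k1 : X.X1 ⟶ X.X0) (k0 : X.X0 ⟶ X.X1) (x : X.X0) :
    X.d1 (k0 x) + k1 (X.d0 x) ∈ Module.jacobson R X.X0 :=
  add_mem (hX.1 ⟨_, rfl⟩) (Module.le_comap_jacobson k1.hom (hX.2 ⟨x, rfl⟩))

theorem bijective_of_homotopic_id [OrzechProperty R] {u : X ⟶ X} (h : Homotopic u (𝟙 X)) :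
    Function.Bijective u.f1 ∧ Function.Bijective u.f0 := by
  obtain ⟨k1, k0, e1, e0⟩ := (homotopic_iff_apply _ _).1 h
  have := X.fin1
  have := X.fin0
  refine ⟨bijective_of_sub_mem_jacobson u.f1.hom fun x => ?_,
    bijective_of_sub_mem_jacobson u.f0.hom fun x => ?_⟩
  · have e := e1 x
    simp only [id_f1, ModuleCat.hom_id, LinearMap.id_coe, id_eq] at e
    simpa [e] using hX.homotopy_apply_mem_jacobson_X1 k1 k0 x
  · have e := e0 x
    simp only [id_f0, ModuleCat.hom_id, LinearMap.id_coe, id_eq] at e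
    simpa [e] using hX.homotopy_apply_mem_jacobson_X0 k1 k0 x

theorem bijective_of_isHtpEquiv [OrzechProperty R] {f : X ⟶ X} (hf : IsHtpEquiv f) :
    Function.Bijective f.f1 ∧ Function.Bijective f.f0 := by
  obtain ⟨g, hfg, hgf⟩ := hf
  obtain ⟨hfg1, hfg0⟩ := hX.bijective_of_homotopic_id hfg
  obtain ⟨hgf1, hgf0⟩ := hX.bijective_of_homotopic_id hgf
  simp only [comp_f1, comp_f0, ConcreteCategory.coe_comp] at hfg1 hfg0 hgf1 hgf0
  exact ⟨⟨hfg1.1.of_comp, hgf1.2.of_comp⟩, ⟨hfg0.1.of_comp, hgf0.2.of_comp⟩⟩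

end RadicalCx

def toStarStar {X : TwoCx R} (f : X ⟶ X) : X ⟶ starCx (starCx X) where
  f1 := f.f1
  f0 := f.f0
  comm1 := by simpa [starCx] using f.comm1
  comm0 := by simpa [starCx] using f.comm0

/-- A contracting homotopy of the cone of `f`, written out in the coordinates `X¹ × X⁰` and
`X⁰ × X¹` of its two terms. -/
structure ConeContraction {X : TwoCx R} (f : X ⟶ X) where
  t1 : X.X1 × X.X0 →ₗ[R] X.X0 × X.X1
  t0 : X.X0 × X.X1 →ₗ[R] X.X1 × X.X0
  eq1 : ∀ p, p = (X.d0 (t1 p).1, -X.d1 (t1 p).2 - f.f0 (t1 p).1)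
    + t0 (X.d1 p.1, -X.d0 p.2 - f.f1 p.1)
  eq0 : ∀ p, p = (X.d1 (t0 p).1, -X.d0 (t0 p).2 - f.f1 (t0 p).1)
    + t1 (X.d0 p.1, -X.d1 p.2 - f.f0 p.1)

theorem nonempty_coneContraction {X : TwoCx R} {f : X ⟶ X}
    (hf : Contractible (coneCx (toStarStar f))) : Nonempty (ConeContraction f) := by
  obtain ⟨s1, s0, e1, e0⟩ := (homotopic_iff_apply _ _).1 hf
  exact ⟨⟨s1.hom, s0.hom, fun p => (sub_zero p).symm.trans (e1 p),
    fun p => (sub_zero p).symm.trans (e0 p)⟩⟩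

namespace ConeContraction

variable {X : TwoCx R} {f : X ⟶ X} (c : ConeContraction f)

theorem t1_mk (a : X.X1) (b : X.X0) : c.t1 (a, b) = c.t1 (a, 0) + c.t1 (0, b) := by
  rw [← map_add, Prod.mk_add_mk, add_zero, zero_add]

theorem t0_mk (a : X.X0) (b : X.X1) : c.t0 (a, b) = c.t0 (a, 0) + c.t0 (0, b) := by
  rw [← map_add, Prod.mk_add_mk, add_zero, zero_add]

theorem t1_zero_neg (b : X.X0) : c.t1 (0, -b) = -c.t1 (0, b) := by
  rw [← map_neg, Prod.neg_mk, neg_zero]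

theorem t0_zero_neg (b : X.X1) : c.t0 (0, -b) = -c.t0 (0, b) := by
  rw [← map_neg, Prod.neg_mk, neg_zero]

/-- Minus the component of the contraction from the `X^*`-summand of the cone to the
`X`-summand. -/
def inv : X ⟶ X where
  f1 := ModuleCat.ofHom (-(LinearMap.fst R X.X1 X.X0 ∘ₗ c.t0 ∘ₗ LinearMap.inr R X.X0 X.X1))
  f0 := ModuleCat.ofHom (-(LinearMap.fst R X.X0 X.X1 ∘ₗ c.t1 ∘ₗ LinearMap.inr R X.X1 X.X0))
  comm1 := by
    ext y
    have := congrArg Prod.fst (c.eq0 (0, y))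
    simp [t1_zero_neg] at this ⊢
    linear_combination (norm := module) this
  comm0 := by
    ext y
    have := congrArg Prod.fst (c.eq1 (0, y))
    simp [t0_zero_neg] at this ⊢
    linear_combination (norm := module) this

theorem homotopic_comp_inv : Homotopic (f ≫ c.inv) (𝟙 X) := by
  refine (homotopic_iff_apply _ _).2
    ⟨ModuleCat.ofHom (-(LinearMap.fst R X.X0 X.X1 ∘ₗ c.t1 ∘ₗ LinearMap.inl R X.X1 X.X0)),
      ModuleCat.ofHom (-(LinearMap.fst R X.X1 X.X0 ∘ₗ c.t0 ∘ₗ LinearMap.inl R X.X0 X.X1)),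
      fun x => ?_, fun x => ?_⟩
  · have := congrArg Prod.fst (c.eq1 (x, 0))
    dsimp only at this
    rw [map_zero, neg_zero, zero_sub, t0_mk, t0_zero_neg] at this
    simp [inv] at this ⊢
    linear_combination (norm := module) -this
  · have := congrArg Prod.fst (c.eq0 (x, 0))
    dsimp only at this
    rw [map_zero, neg_zero, zero_sub, t1_mk, t1_zero_neg] at this
    simp [inv] at this ⊢
    linear_combination (norm := module) -this

theorem homotopic_inv_comp : Homotopic (c.inv ≫ f) (𝟙 X) := by
  refine (homotopic_iff_apply _ _).2
    ⟨ModuleCat.ofHom (LinearMap.snd R X.X1 X.X0 ∘ₗ c.t0 ∘ₗ LinearMap.inr R X.X0 X.X1),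
      ModuleCat.ofHom (LinearMap.snd R X.X0 X.X1 ∘ₗ c.t1 ∘ₗ LinearMap.inr R X.X1 X.X0),
      fun x => ?_, fun x => ?_⟩
  · have := congrArg Prod.snd (c.eq0 (0, x))
    simp [inv, t1_zero_neg] at this ⊢
    linear_combination (norm := module) -this
  · have := congrArg Prod.snd (c.eq1 (0, x))
    simp [inv, t0_zero_neg] at this ⊢
    linear_combination (norm := module) -this

end ConeContraction

theorem isHtpEquiv_of_contractible_cone {X : TwoCx R} {f : X ⟶ X}
    (hf : Contractible (coneCx (toStarStar f))) : IsHtpEquiv f :=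
  let ⟨c⟩ := nonempty_coneContraction hf
  ⟨c.inv, c.homotopic_comp_inv, c.homotopic_inv_comp⟩

section KSum

variable (X : TwoCx R)

abbrev kSum : TwoCx R := dsum (kP X.X1 X.fin1 X.proj1) (kS X.X0 X.fin0 X.proj0)

theorem contractible_kSum : Contractible (kSum X) :=
  (homotopic_iff_apply _ _).2 ⟨ModuleCat.ofHom (LinearMap.prodMap 0 LinearMap.id),
    ModuleCat.ofHom (LinearMap.prodMap LinearMap.id 0), fun p => by simp, fun p => by simp⟩

def kSumToConeId : kSum X ⟶ coneCx (toStarStar (𝟙 X)) where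
  f1 := ModuleCat.ofHom <|
    (LinearMap.fst R X.X1 X.X0 + X.d0.hom ∘ₗ LinearMap.snd R X.X1 X.X0).prod
      (-LinearMap.snd R X.X1 X.X0)
  f0 := ModuleCat.ofHom <|
    (X.d1.hom ∘ₗ LinearMap.fst R X.X1 X.X0 + LinearMap.snd R X.X1 X.X0).prod
      (-LinearMap.fst R X.X1 X.X0)
  comm1 := ConcreteCategory.hom_ext _ _ fun p => Prod.ext (by simp) (by simp [sf1, toStarStar])
  comm0 := ConcreteCategory.hom_ext _ _ fun p => Prod.ext (by simp) (by simp [sf0, toStarStar])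

theorem isIso_kSumToConeId : IsIso (kSumToConeId X) := by
  refine isIso_of_bijective _ (Function.Involutive.bijective fun p => ?_)
    (Function.bijective_iff_has_inverse.2
      ⟨fun q => (-q.2, q.1 + X.d1 q.2), fun p => ?_, fun q => ?_⟩)
  all_goals ext <;> simp [kSumToConeId]

variable {X}

def coneIdToCone (f : X ⟶ X) : coneCx (toStarStar (𝟙 X)) ⟶ coneCx (toStarStar f) where
  f1 := ModuleCat.ofHom (LinearMap.prodMap LinearMap.id f.f0.hom)
  f0 := ModuleCat.ofHom (LinearMap.prodMap LinearMap.id f.f1.hom)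
  comm1 := ConcreteCategory.hom_ext _ _ fun p =>
    Prod.ext (by simp) (by simp [sf1, toStarStar, TwoHom.comm0_apply])
  comm0 := ConcreteCategory.hom_ext _ _ fun p =>
    Prod.ext (by simp) (by simp [sf0, toStarStar, TwoHom.comm1_apply])

theorem isIso_coneIdToCone {f : X ⟶ X} (h1 : Function.Bijective f.f1)
    (h0 : Function.Bijective f.f0) : IsIso (coneIdToCone f) :=
  isIso_of_bijective _ (Function.bijective_id.prodMap h0) (Function.bijective_id.prodMap h1)

def kSumIsoCone (f : X ⟶ X) (h1 : Function.Bijective f.f1) (h0 : Function.Bijective f.f0) :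
    kSum X ≅ coneCx (toStarStar f) :=
  haveI := isIso_kSumToConeId X
  haveI := isIso_coneIdToCone h1 h0
  asIso (kSumToConeId X ≫ coneIdToCone f)

end KSum

section LinearAlgebra

variable {M N P : Type*} [AddCommGroup M] [Module R M] [AddCommGroup N] [Module R N]
  [AddCommGroup P] [Module R P]

def liftAlong (a : N →ₗ[R] M) (ha : Function.Injective a) (g : P →ₗ[R] M)
    (hg : ∀ x, g x ∈ LinearMap.range a) : P →ₗ[R] N :=
  (LinearEquiv.ofInjective a ha).symm.toLinearMap ∘ₗ g.codRestrict _ hg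

theorem apply_liftAlong (a : N →ₗ[R] M) (ha : Function.Injective a) (g : P →ₗ[R] M)
    (hg : ∀ x, g x ∈ LinearMap.range a) (x : P) : a (liftAlong a ha g hg x) = g x := by
  simp [liftAlong]

theorem bijective_coprod_of_exact {a : N →ₗ[R] M} {b : M →ₗ[R] P} (ha : Function.Injective a)
    (hab : LinearMap.range a = LinearMap.ker b) (σ : P →ₗ[R] M) (hσ : ∀ x, b (σ x) = x) :
    Function.Bijective (σ.coprod a) := by
  have hba (y : N) : b (a y) = 0 := by
    rw [← LinearMap.mem_ker, ← hab]; exact ⟨y, rfl⟩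
  refine ⟨fun p q hpq => ?_, fun z => ?_⟩
  · simp only [LinearMap.coprod_apply] at hpq
    have h1 : p.1 = q.1 := by simpa [hba, hσ] using congrArg b hpq
    rw [h1, add_right_inj] at hpq
    exact Prod.ext h1 (ha hpq)
  · obtain ⟨y, hy⟩ : z - σ (b z) ∈ LinearMap.range a := by simp [hab, hσ]
    exact ⟨(b z, y), by simp [hy]⟩

end LinearAlgebra

namespace SESData

section General

variable {Y Z X : TwoCx R} (s : SESData Y Z X)

@[simp] theorem b_a_f1 (y : Y.X1) : s.b.f1 (s.a.f1 y) = 0 := by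
  rw [← LinearMap.mem_ker, ← s.exact1]; exact ⟨y, rfl⟩

@[simp] theorem b_a_f0 (y : Y.X0) : s.b.f0 (s.a.f0 y) = 0 := by
  rw [← LinearMap.mem_ker, ← s.exact0]; exact ⟨y, rfl⟩

variable {P : Type u} [AddCommGroup P] [Module R P]

def lift1 (g : P →ₗ[R] Z.X1) (hg : ∀ x, s.b.f1 (g x) = 0) : P →ₗ[R] Y.X1 :=
  liftAlong s.a.f1.hom s.inj1 g fun x => s.exact1 ▸ hg x

def lift0 (g : P →ₗ[R] Z.X0) (hg : ∀ x, s.b.f0 (g x) = 0) : P →ₗ[R] Y.X0 :=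
  liftAlong s.a.f0.hom s.inj0 g fun x => s.exact0 ▸ hg x

theorem a_lift1 (g : P →ₗ[R] Z.X1) (hg : ∀ x, s.b.f1 (g x) = 0) (x : P) :
    s.a.f1 (s.lift1 g hg x) = g x :=
  apply_liftAlong _ _ _ _ x

theorem a_lift0 (g : P →ₗ[R] Z.X0) (hg : ∀ x, s.b.f0 (g x) = 0) (x : P) :
    s.a.f0 (s.lift0 g hg x) = g x :=
  apply_liftAlong _ _ _ _ x

structure GradedSection where
  σ1 : X.X1 →ₗ[R] Z.X1
  σ0 : X.X0 →ₗ[R] Z.X0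
  b_σ1 : ∀ x, s.b.f1 (σ1 x) = x
  b_σ0 : ∀ x, s.b.f0 (σ0 x) = x

attribute [simp] GradedSection.b_σ1 GradedSection.b_σ0

theorem nonempty_gradedSection : Nonempty s.GradedSection := by
  have := X.proj1
  have := X.proj0
  obtain ⟨σ1, h1⟩ := Module.projective_lifting_property s.b.f1.hom LinearMap.id s.surj1
  obtain ⟨σ0, h0⟩ := Module.projective_lifting_property s.b.f0.hom LinearMap.id s.surj0
  exact ⟨⟨σ1, σ0, LinearMap.congr_fun h1, LinearMap.congr_fun h0⟩⟩

end General

variable {X Z : TwoCx R} (s : SESData (starCx X) Z X)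

theorem a_f1_d1 (y : X.X1) : s.a.f1 (X.d1 y) = -Z.d0 (s.a.f0 y) := by
  rw [← neg_eq_iff_eq_neg]; simpa using s.a.comm0_apply y

theorem a_f0_d0 (y : X.X0) : s.a.f0 (X.d0 y) = -Z.d1 (s.a.f1 y) := by
  rw [← neg_eq_iff_eq_neg]; simpa using s.a.comm1_apply y

variable {s} (σ : s.GradedSection)

def connecting : X ⟶ X where
  f1 := ModuleCat.ofHom <| s.lift0 (σ.σ0 ∘ₗ X.d1.hom - Z.d1.hom ∘ₗ σ.σ1) fun x => by
    simp [s.b.comm1_apply]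
  f0 := ModuleCat.ofHom <| s.lift1 (σ.σ1 ∘ₗ X.d0.hom - Z.d0.hom ∘ₗ σ.σ0) fun x => by
    simp [s.b.comm0_apply]
  comm1 := ConcreteCategory.hom_ext _ _ fun x => s.inj1 <| by
    simp only [ConcreteCategory.comp_apply, ModuleCat.hom_ofHom]
    rw [a_lift1, a_f1_d1, a_lift0]
    simp
  comm0 := ConcreteCategory.hom_ext _ _ fun x => s.inj0 <| by
    simp only [ConcreteCategory.comp_apply, ModuleCat.hom_ofHom]
    rw [a_lift0, a_f0_d0, a_lift1]
    simp

theorem a_connecting_f1 (x : X.X1) :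
    s.a.f0 ((connecting σ).f1 x) = σ.σ0 (X.d1 x) - Z.d1 (σ.σ1 x) := by
  simp only [connecting, ModuleCat.hom_ofHom]
  exact s.a_lift0 _ _ x

theorem a_connecting_f0 (x : X.X0) :
    s.a.f1 ((connecting σ).f0 x) = σ.σ1 (X.d0 x) - Z.d0 (σ.σ0 x) := by
  simp only [connecting, ModuleCat.hom_ofHom]
  exact s.a_lift1 _ _ x

theorem connecting_homotopic (σ ρ : s.GradedSection) :
    Homotopic (connecting σ) (connecting ρ) := by
  refine (homotopic_iff_apply _ _).2
    ⟨ModuleCat.ofHom (s.lift1 (σ.σ1 - ρ.σ1) fun x => by simp),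
      ModuleCat.ofHom (s.lift0 (σ.σ0 - ρ.σ0) fun x => by simp),
      fun x => s.inj0 ?_, fun x => s.inj1 ?_⟩
  · simp only [map_add, map_sub, ModuleCat.hom_ofHom]
    rw [a_connecting_f1, a_connecting_f1, a_f0_d0, a_lift1, a_lift0]
    simp only [LinearMap.sub_apply, map_sub]
    abel
  · simp only [map_add, map_sub, ModuleCat.hom_ofHom]
    rw [a_connecting_f0, a_connecting_f0, a_f1_d1, a_lift0, a_lift1]
    simp only [LinearMap.sub_apply, map_sub]
    abel

variable {Z' : TwoCx R} {t : SESData (starCx X) Z' X}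

def GradedSection.transport (e : Z ≅ Z') (heb : e.hom ≫ t.b = s.b) : t.GradedSection where
  σ1 := e.hom.f1.hom ∘ₗ σ.σ1
  σ0 := e.hom.f0.hom ∘ₗ σ.σ0
  b_σ1 x := by simp [← ConcreteCategory.comp_apply, ← comp_f1, heb]
  b_σ0 x := by simp [← ConcreteCategory.comp_apply, ← comp_f0, heb]

theorem connecting_transport (e : Z ≅ Z') (hea : s.a ≫ e.hom = t.a) (heb : e.hom ≫ t.b = s.b) :
    connecting (σ.transport e heb) = connecting σ := by
  ext x
  · apply t.inj0
    rw [a_connecting_f1, ← hea, comp_f0, ConcreteCategory.comp_apply, a_connecting_f1]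
    simp [GradedSection.transport, TwoHom.comm1_apply]
  · apply t.inj1
    rw [a_connecting_f0, ← hea, comp_f1, ConcreteCategory.comp_apply, a_connecting_f0]
    simp [GradedSection.transport, TwoHom.comm0_apply]

end SESData

theorem SESEquiv.trans {Y X Z Z' Z'' : TwoCx R} {s : SESData Y Z X} {t : SESData Y Z' X}
    {v : SESData Y Z'' X} (h : SESEquiv s t) (h' : SESEquiv t v) : SESEquiv s v := by
  obtain ⟨e, hea, heb⟩ := h
  obtain ⟨e', hea', heb'⟩ := h'
  exact ⟨e ≪≫ e', by simp [← hea', ← Category.assoc, hea], by simp [heb', heb]⟩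

theorem SESEquiv.connecting_homotopic {X Z Z' : TwoCx R} {s : SESData (starCx X) Z X}
    {t : SESData (starCx X) Z' X} (h : SESEquiv s t) (σ : s.GradedSection)
    (ρ : t.GradedSection) : Homotopic (SESData.connecting σ) (SESData.connecting ρ) := by
  obtain ⟨e, hea, heb⟩ := h
  rw [← SESData.connecting_transport σ e hea heb]
  exact SESData.connecting_homotopic _ _

section CanonicalExtension

variable {X : TwoCx R}

def canonicalSection (f : X ⟶ X) : (canonSES (toStarStar f)).GradedSection where
  σ1 := LinearMap.inl R X.X1 X.X0
  σ0 := LinearMap.inl R X.X0 X.X1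
  b_σ1 _ := rfl
  b_σ0 _ := rfl

theorem connecting_canonicalSection (f : X ⟶ X) :
    SESData.connecting (canonicalSection f) = f := by
  ext x
  · apply (canonSES (toStarStar f)).inj0
    rw [SESData.a_connecting_f1]
    ext <;> simp [canonicalSection, canonSES, coneIn, sf1, toStarStar]
  · apply (canonSES (toStarStar f)).inj1
    rw [SESData.a_connecting_f0]
    ext <;> simp [canonicalSection, canonSES, coneIn, sf0, toStarStar]

end CanonicalExtension

namespace SESData

variable {X Z : TwoCx R} {s : SESData (starCx X) Z X} (σ : s.GradedSection)

def coneToMiddle : coneCx (toStarStar (connecting σ)) ⟶ Z where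
  f1 := ModuleCat.ofHom (σ.σ1.coprod s.a.f1.hom)
  f0 := ModuleCat.ofHom (σ.σ0.coprod s.a.f0.hom)
  comm1 := ConcreteCategory.hom_ext _ _ fun p => by
    simp only [toStarStar, sf1, ModuleCat.hom_neg, LinearMap.neg_comp, ModuleCat.hom_comp,
      ConcreteCategory.hom_ofHom, LinearMap.coprod_comp_prod, LinearMap.add_apply,
      LinearMap.coe_comp, LinearMap.coe_fst, Function.comp_apply, LinearMap.sub_apply,
      LinearMap.neg_apply, LinearMap.coe_snd, map_sub, map_neg, LinearMap.coprod_apply, map_add]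
    rw [a_f0_d0, a_connecting_f1]
    abel
  comm0 := ConcreteCategory.hom_ext _ _ fun p => by
    simp only [toStarStar, sf0, ModuleCat.hom_neg, LinearMap.neg_comp, ModuleCat.hom_comp,
      ConcreteCategory.hom_ofHom, LinearMap.coprod_comp_prod, LinearMap.add_apply,
      LinearMap.coe_comp, LinearMap.coe_fst, Function.comp_apply, LinearMap.sub_apply,
      LinearMap.neg_apply, LinearMap.coe_snd, map_sub, map_neg, LinearMap.coprod_apply, map_add]
    rw [a_f1_d1, a_connecting_f0]
    abel

theorem sesEquiv_canonSES_connecting :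
    SESEquiv (canonSES (toStarStar (connecting σ))) s := by
  have := isIso_of_bijective (coneToMiddle σ)
    (bijective_coprod_of_exact s.inj1 s.exact1 σ.σ1 σ.b_σ1)
    (bijective_coprod_of_exact s.inj0 s.exact0 σ.σ0 σ.b_σ0)
  refine ⟨asIso (coneToMiddle σ), ?_, ?_⟩ <;> ext <;>
    simp [coneToMiddle, canonSES, coneIn, coneOut, s.b_a_f1, s.b_a_f0]

end SESData

theorem sesEquiv_canonSES_of_homotopic {X : TwoCx R} {f g : X ⟶ X} (h : Homotopic f g) :
    SESEquiv (canonSES (toStarStar f)) (canonSES (toStarStar g)) := by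
  obtain ⟨k1, k0, e1, e0⟩ := (homotopic_iff_apply _ _).1 h
  let φ : coneCx (toStarStar f) ⟶ coneCx (toStarStar g) :=
    { f1 := ModuleCat.ofHom ((LinearEquiv.refl R X.X1).skewProd (LinearEquiv.refl R X.X0) k1.hom)
      f0 := ModuleCat.ofHom ((LinearEquiv.refl R X.X0).skewProd (LinearEquiv.refl R X.X1) k0.hom)
      comm1 := ConcreteCategory.hom_ext _ _ fun p => by
        ext
        · simp
        · simp [sf1, toStarStar]
          linear_combination (norm := module) -(e1 p.1)
      comm0 := ConcreteCategory.hom_ext _ _ fun p => by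
        ext
        · simp
        · simp [sf0, toStarStar]
          linear_combination (norm := module) -(e0 p.1) }
  have := isIso_of_bijective φ (LinearEquiv.bijective _) (LinearEquiv.bijective _)
  refine ⟨asIso φ, ?_, ?_⟩ <;> ext <;> simp [φ, canonSES, coneIn, coneOut]

namespace RadicalCx

variable [OrzechProperty R] {X : TwoCx R} (hX : RadicalCx X)
include hX

/-- The cone of the connecting endomorphism is the middle term, so it is contractible. -/
theorem bijective_connecting {Z : TwoCx R} {s : SESData (starCx X) Z X} (hZ : Contractible Z)
    (σ : s.GradedSection) :
    Function.Bijective (SESData.connecting σ).f1 ∧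
      Function.Bijective (SESData.connecting σ).f0 := by
  obtain ⟨e, -, -⟩ := SESData.sesEquiv_canonSES_connecting σ
  exact hX.bijective_of_isHtpEquiv (isHtpEquiv_of_contractible_cone (hZ.of_iso e.symm))

end RadicalCx

section Classification

variable {X : TwoCx R}

abbrev ExtKSum (X : TwoCx R) : Type (u + 1) :=
  {s : Σ Z : TwoCx R, SESData (starCx X) Z X // Nonempty (s.1 ≅ kSum X)}

def ExtKSum.connecting (s : ExtKSum X) : X ⟶ X :=
  SESData.connecting (Classical.choice s.1.2.nonempty_gradedSection)

variable [OrzechProperty R] (hX : RadicalCx X)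
include hX

theorem ExtKSum.isIso_connecting (s : ExtKSum X) : IsIso s.connecting := by
  obtain ⟨e⟩ := s.2
  obtain ⟨h1, h0⟩ := hX.bijective_connecting ((contractible_kSum X).of_iso e.symm) _
  exact isIso_of_bijective _ h1 h0

def ExtKSum.toAut (s : ExtKSum X) : Aut ((KFun R).obj X) :=
  haveI := s.isIso_connecting hX
  (KFun R).mapIso (asIso s.connecting)

theorem bijective_preimage (α : Aut ((KFun R).obj X)) :
    Function.Bijective ((KFun R).preimage α.hom).f1 ∧
      Function.Bijective ((KFun R).preimage α.hom).f0 :=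
  hX.bijective_of_isHtpEquiv (isHtpEquiv_preimage α)

def autToExt (α : Aut ((KFun R).obj X)) : ExtKSum X :=
  ⟨⟨_, canonSES (toStarStar ((KFun R).preimage α.hom))⟩,
    ⟨(kSumIsoCone _ (bijective_preimage hX α).1 (bijective_preimage hX α).2).symm⟩⟩

def extEquivAut :
    Quot (fun s t : ExtKSum X => SESEquiv s.1.2 t.1.2) ≃ Aut ((KFun R).obj X) where
  toFun := Quot.lift (ExtKSum.toAut hX) fun s t h =>
    Iso.ext <| (KFun_map_eq_iff _ _).2 (h.connecting_homotopic _ _)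
  invFun α := Quot.mk _ (autToExt hX α)
  left_inv := Quot.ind fun s => Quot.sound <| by
    have h : Homotopic ((KFun R).preimage (s.toAut hX).hom) s.connecting :=
      (KFun_map_eq_iff _ _).1 (Functor.map_preimage _ _)
    exact (sesEquiv_canonSES_of_homotopic h).trans (SESData.sesEquiv_canonSES_connecting _)
  right_inv α := Iso.ext <| by
    have h := SESData.connecting_homotopic (Classical.choice (SESData.nonempty_gradedSection _))
      (canonicalSection ((KFun R).preimage α.hom))
    rw [connecting_canonicalSection] at h
    exact ((KFun_map_eq_iff _ _).2 h).trans (Functor.map_preimage _ _)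

end Classification

end

/-- For a radical object `X` of `C₂(P)`, the set
`Ext¹_{C₂(P)}(X, X^*)_{K_{X¹} ⊕ K^*_{X⁰}}` of equivalence classes of short exact sequences
`0 → X^* → Z → X → 0` with middle term isomorphic to `K_{X¹} ⊕ K^*_{X⁰}` is in bijection
with the automorphism group of `X` in `K₂(P)`. -/
theorem statement_9 {A : Type u} [Ring A] [Algebra ℂ A] [FiniteDimensional ℂ A]
    (X : TwoCx Aᵐᵒᵖ) (hX : RadicalCx X) :
    Nonempty
      (Quot (fun s t : {s : Σ Z : TwoCx Aᵐᵒᵖ, SESData (starCx X) Z X //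
            Nonempty (s.1 ≅ dsum (kP X.X1 X.fin1 X.proj1) (kS X.X0 X.fin0 X.proj0))} =>
          SESEquiv s.1.2 t.1.2) ≃
        Aut ((KFun Aᵐᵒᵖ).obj X)) := by
  have : IsNoetherianRing Aᵐᵒᵖ := isNoetherian_of_tower ℂ (IsNoetherian.iff_fg.2 inferInstance)
  exact ⟨extEquivAut hX⟩
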